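/- Let R̂ : ℝ → ℝ^{3×3} be a differentiable curve satisfying the modified observer equation dR̂/dt = R̂ S − k_e R̂(R̂ᵀR̂ − I), where S(t) is a skew-symmetric matrix for each t and k_e > 0. Then the function V₁(t) = ‖R̂(t)ᵀR̂(t) − I‖² (squared Frobenius norm) satisfies dV₁/dt = −4 k_e ‖R̂(R̂ᵀR̂ − I)‖². -/

import Mathlib

/-!
With `E = RᵀR - 1` symmetric, `V₁' = 2 tr(E Ė)`. Along the flow, `Ė = (G S - S G) - 2 k_e G E`
where `G = RᵀR` commutes with `E`; hence the commutator term has zero trace against `E`, and what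
remains is `-4 k_e tr(E G E) = -4 k_e ‖R E‖²`.
-/

open Matrix

attribute [local instance] Matrix.frobeniusNormedAddCommGroup Matrix.frobeniusNormedSpace
attribute [local instance] Matrix.frobeniusNormedRing Matrix.frobeniusNormedAlgebra

section Calculus

variable {m n : Type*} [Fintype m] [Fintype n]

theorem HasDerivAt.matrix_transpose {f : ℝ → Matrix m n ℝ} {f' : Matrix m n ℝ} {t : ℝ}
    (hf : HasDerivAt f f' t) : HasDerivAt (fun s => (f s)ᵀ) f'ᵀ t :=
  (transposeLinearEquiv m n ℝ ℝ).toLinearMap.toContinuousLinearMap.hasFDerivAt.comp_hasDerivAt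
    t hf

theorem HasDerivAt.matrix_trace {f : ℝ → Matrix n n ℝ} {f' : Matrix n n ℝ} {t : ℝ}
    (hf : HasDerivAt f f' t) : HasDerivAt (fun s => trace (f s)) (trace f') t :=
  (traceLinearMap n ℝ ℝ).toContinuousLinearMap.hasFDerivAt.comp_hasDerivAt t hf

variable [DecidableEq n]

theorem HasDerivAt.trace_transpose_mul_self {f : ℝ → Matrix n n ℝ} {f' : Matrix n n ℝ}
    {t : ℝ} (hf : HasDerivAt f f' t) :
    HasDerivAt (fun s => trace ((f s)ᵀ * f s)) (2 * trace ((f t)ᵀ * f')) t := by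
  refine (hf.matrix_transpose.mul hf).matrix_trace.congr_deriv ?_
  rw [trace_add, ← trace_transpose (f'ᵀ * f t), transpose_mul, transpose_transpose]
  ring

theorem HasDerivAt.gram_sub_one {f : ℝ → Matrix n n ℝ} {f' : Matrix n n ℝ} {t : ℝ}
    (hf : HasDerivAt f f' t) :
    HasDerivAt (fun s => (f s)ᵀ * f s - 1) (f'ᵀ * f t + (f t)ᵀ * f') t :=
  (hf.matrix_transpose.mul hf).sub_const 1

end Calculus

section Algebra

variable {n R : Type*} [Fintype n] [CommRing R]

theorem trace_mul_commutator_eq_zero {E G : Matrix n n R} (S : Matrix n n R)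
    (h : Commute E G) : trace (E * (G * S - S * G)) = 0 := by
  rw [mul_sub, trace_sub, ← mul_assoc E S, trace_mul_comm (E * S), ← mul_assoc, h.eq, mul_assoc,
    sub_self]

theorem transpose_transpose_mul_self_sub_one [DecidableEq n] (A : Matrix n n R) :
    (Aᵀ * A - 1)ᵀ = Aᵀ * A - 1 := by
  rw [transpose_sub, transpose_mul, transpose_transpose, transpose_one]

theorem trace_mul_gram_deriv_observer [DecidableEq n] (A S : Matrix n n R) (k : R)
    (hS : Sᵀ = -S) :
    let E := Aᵀ * A - 1
    let D := A * S - k • (A * E)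
    trace (E * (Dᵀ * A + Aᵀ * D)) = -2 * k * trace ((A * E)ᵀ * (A * E)) := by
  intro E D
  have hE : Eᵀ = E := transpose_transpose_mul_self_sub_one A
  have hcomm : Commute E (Aᵀ * A) := (Commute.refl _).sub_left (Commute.one_left _)
  have hgram : Dᵀ * A + Aᵀ * D
      = (Aᵀ * A * S - S * (Aᵀ * A)) - (2 * k) • (Aᵀ * A * E) := by
    simp only [D, transpose_sub, transpose_smul, transpose_mul, hS, hE, sub_mul, mul_sub,
      neg_mul, Matrix.smul_mul, Matrix.mul_smul, mul_assoc, ← hcomm.eq]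
    simp only [← mul_assoc, hcomm.eq]
    module
  rw [hgram, mul_sub, trace_sub, trace_mul_commutator_eq_zero S hcomm, Matrix.mul_smul,
    trace_smul, transpose_mul, hE]
  simp only [mul_assoc, smul_eq_mul]
  ring

end Algebra

theorem V1_deriv_modified_observer_general (k_e : ℝ)
    (R : ℝ → Matrix (Fin 3) (Fin 3) ℝ) (S : ℝ → Matrix (Fin 3) (Fin 3) ℝ)
    (hS : ∀ t, (S t)ᵀ = -(S t))
    (hR : ∀ t, HasDerivAt R (R t * S t - k_e • (R t * ((R t)ᵀ * R t - 1))) t) :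
    ∀ t, HasDerivAt
      (fun t => Matrix.trace ((((R t)ᵀ * R t - 1)ᵀ) * ((R t)ᵀ * R t - 1)))
      (-4 * k_e *
        Matrix.trace ((R t * ((R t)ᵀ * R t - 1))ᵀ * (R t * ((R t)ᵀ * R t - 1)))) t := by
  intro t
  convert (hR t).gram_sub_one.trace_transpose_mul_self using 1
  rw [transpose_transpose_mul_self_sub_one, trace_mul_gram_deriv_observer (R t) (S t) k_e (hS t)]
  ring

theorem V1_deriv_modified_observer (k_e : ℝ) (hk : 0 < k_e)
    (R : ℝ → Matrix (Fin 3) (Fin 3) ℝ) (S : ℝ → Matrix (Fin 3) (Fin 3) ℝ)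
    (hS : ∀ t, (S t)ᵀ = -(S t))
    (hR : ∀ t, HasDerivAt R (R t * S t - k_e • (R t * ((R t)ᵀ * R t - 1))) t) :
    ∀ t, HasDerivAt
      (fun t => Matrix.trace ((((R t)ᵀ * R t - 1)ᵀ) * ((R t)ᵀ * R t - 1)))
      (-4 * k_e *
        Matrix.trace ((R t * ((R t)ᵀ * R t - 1))ᵀ * (R t * ((R t)ᵀ * R t - 1)))) t :=
  V1_deriv_modified_observer_general k_e R S hS hR
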